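/- Let G be a connected finite simple graph, T a subtree of G with at most t leaves (t ≥ 2), and S ⊆ V(G) with S − V(T) nonempty. Suppose P₀ is a path in G from some vertex s₀ ∈ S − V(T) to T, internally disjoint from T, chosen of maximum length among all paths from vertices lying in some maximum independent subset of S − V(T) to T. Then P₀ intersects every maximum independent subset of S − V(T), and hence the tree T' = T + P₀ satisfies α_G(S − V(T')) ≤ α_G(S − V(T)) − 1 and T' has at most t + 1 leaves. -/

import Mathlib

open SimpleGraph Set

variable {V : Type*}

/-- The independence number of `S` in `G`: the maximum cardinality of a subset of `S`
that is independent in `G`. -/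
noncomputable def indepNumOn (G : SimpleGraph V) (S : Set V) : ℕ :=
  sSup {n | ∃ I : Set V, I ⊆ S ∧ I.Pairwise (fun a b => ¬ G.Adj a b) ∧ I.ncard = n}

/-- `I` is a maximum independent subset of `S` in `G`. -/
def MaxIndepOn (G : SimpleGraph V) (S : Set V) (I : Set V) : Prop :=
  I ⊆ S ∧ I.Pairwise (fun a b => ¬ G.Adj a b) ∧ I.ncard = indepNumOn G S

/-- Two `x`–`y` walks are internally disjoint if they share only `x` and `y`. -/
def InternallyDisjoint (G : SimpleGraph V) {x y : V} (p q : G.Walk x y) : Prop :=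
  ∀ v, v ∈ p.support → v ∈ q.support → v = x ∨ v = y

/-- Local connectivity `κ_G(x,y)`: maximum number of pairwise internally disjoint
`x`–`y` paths in `G`. -/
noncomputable def localConn (G : SimpleGraph V) (x y : V) : ℕ :=
  sSup {n | ∃ P : Set (G.Path x y),
    P.Pairwise (fun p q => InternallyDisjoint G p.1 q.1) ∧ P.ncard = n}

/-- `κ_G(S)`: the minimum of local connectivities over distinct pairs in `S`,
`+∞` if `S` has at most one element. -/
noncomputable def setConn (G : SimpleGraph V) (S : Set V) : ℕ∞ :=
  ⨅ x ∈ S, ⨅ y ∈ S, ⨅ _ : x ≠ y, (localConn G x y : ℕ∞)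

/-- Vertex connectivity `κ(G)`: the maximum `k` such that `G` has more than `k`
vertices and removing fewer than `k` vertices always leaves a connected graph. -/
noncomputable def vertexConn (G : SimpleGraph V) [Fintype V] : ℕ :=
  sSup {k | k < Fintype.card V ∧ ∀ X : Finset V, X.card < k →
    (G.induce ((↑X : Set V)ᶜ)).Connected}

/-- The set of leaves (vertices of degree one) of a subgraph. -/
def subLeaves {G : SimpleGraph V} (T : G.Subgraph) : Set V :=
  {v | v ∈ T.verts ∧ (T.neighborSet v).ncard = 1}

/-- The set of branch vertices (vertices of degree at least three) of a subgraph. -/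
def subBranches {G : SimpleGraph V} (T : G.Subgraph) : Set V :=
  {v | v ∈ T.verts ∧ 3 ≤ (T.neighborSet v).ncard}

/-! If a maximum independent set `I` of `S \ V(T)` missed `P₀`, then `s₀ ∉ I`, so by
maximality `s₀` has a neighbour `s₁ ∈ I`; prepending the edge `s₁s₀` to `P₀` gives a longer
admissible path, contradicting the choice of `P₀`. So deleting `V(P₀)` removes a vertex from
every maximum independent set, and the independence number drops.

Attaching `P₀` to `T` one edge at a time, each edge joins a new vertex to the current forest,
so `T + P₀` stays a tree. The interior vertices of `P₀` get degree two, and its end in `T` is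
not a leaf once `T` has a second vertex, so `s₀` is the only possible new leaf. -/

namespace SimpleGraph

variable {G : SimpleGraph V}

namespace Subgraph

theorem isAcyclic_spanningCoe_iff (H : G.Subgraph) :
    H.spanningCoe.IsAcyclic ↔ H.coe.IsAcyclic := by
  refine ⟨fun h => h.embedding H.coeEmbeddingSpanningCoe, fun h v c hc => ?_⟩
  have hverts : ∀ x ∈ c.support, x ∈ H.verts := by
    intro x hx
    obtain ⟨e, he, hxe⟩ := (Walk.mem_support_iff_exists_mem_edges_of_not_nil hc.not_nil).mp hx
    exact H.mem_verts_of_mem_edge (H.edgeSet_spanningCoe ▸ c.edges_subset_edgeSet he) hxe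
  have hc' : (c.induce H.verts hverts).IsCycle := by
    rwa [← Walk.isCycle_map_iff_of_injective (f := (Embedding.induce H.verts).toHom)
      Subtype.val_injective, Walk.map_induce]
  -- `h` applies because `H.spanningCoe.induce H.verts` unfolds to `H.coe`
  exact h _ hc'

theorem isAcyclic_sup_subgraphOfAdj {H : G.Subgraph} (hH : H.coe.IsAcyclic) {a b : V}
    (hab : G.Adj a b) (ha : a ∉ H.verts) : (H ⊔ G.subgraphOfAdj hab).coe.IsAcyclic := by
  rw [← isAcyclic_spanningCoe_iff] at hH ⊢
  have hnreach : ¬ H.spanningCoe.Reachable a b := by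
    rintro ⟨w⟩
    exact ha (w.adj_snd (Walk.not_nil_of_ne hab.ne)).fst_mem
  rw [sup_spanningCoe, spanningCoe_subgraphOfAdj]
  exact hH.sup_edge_of_not_reachable hnreach

theorem isAcyclic_sup_toSubgraph {H : G.Subgraph} (hH : H.coe.IsAcyclic) {s u : V}
    {p : G.Walk s u} (hp : p.IsPath) (hpH : ∀ v ∈ p.support, v ∈ H.verts → v = u) :
    (H ⊔ p.toSubgraph).coe.IsAcyclic := by
  induction p with
  | nil =>
    rw [← isAcyclic_spanningCoe_iff] at hH ⊢
    refine hH.anti fun x y hxy => ?_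
    simpa using hxy
  | @cons s w u h q ih =>
    have hsq : s ∉ q.support := (Walk.cons_isPath_iff h q).mp hp |>.2
    have hs : s ∉ (H ⊔ q.toSubgraph).verts := by
      rintro (hsH | hsq')
      · exact hsq (hpH s (Walk.start_mem_support _) hsH ▸ q.end_mem_support)
      · exact hsq (q.mem_verts_toSubgraph.mp hsq')
    have hsup : H ⊔ (Walk.cons h q).toSubgraph = (H ⊔ q.toSubgraph) ⊔ G.subgraphOfAdj h := by
      rw [Walk.toSubgraph, sup_comm (G.subgraphOfAdj h), ← sup_assoc]
    rw [hsup]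
    exact isAcyclic_sup_subgraphOfAdj
      (ih hp.of_cons fun v hv hvH => hpH v (List.mem_cons_of_mem _ hv) hvH) h hs

theorem isTree_coe_sup_toSubgraph {H : G.Subgraph} (hH : H.coe.IsTree) {s u : V}
    {p : G.Walk s u} (hp : p.IsPath) (hu : u ∈ H.verts)
    (hpH : ∀ v ∈ p.support, v ∈ H.verts → v = u) : (H ⊔ p.toSubgraph).coe.IsTree :=
  ⟨(connected_sup ⟨hH.connected.preconnected⟩ p.toSubgraph_connected.preconnected
    ⟨u, hu, p.end_mem_verts_toSubgraph⟩).coe, isAcyclic_sup_toSubgraph hH.isAcyclic hp hpH⟩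

end Subgraph

theorem Walk.IsPath.ncard_neighborSet_toSubgraph_eq_two {s u v : V} {p : G.Walk s u}
    (hp : p.IsPath) (hv : v ∈ p.support) (hvs : v ≠ s) (hvu : v ≠ u) :
    (p.toSubgraph.neighborSet v).ncard = 2 := by
  obtain ⟨i, rfl, hi⟩ := Walk.mem_support_iff_exists_getVert.mp hv
  refine hp.ncard_neighborSet_toSubgraph_internal_eq_two ?_ ?_
  · rintro rfl
    exact hvs (Walk.getVert_zero p)
  · exact lt_of_le_of_ne hi fun h => hvu (h ▸ Walk.getVert_length p)

variable [Finite V]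

theorem mem_subLeaves_sup_toSubgraph {H : G.Subgraph} {s u v : V} {p : G.Walk s u}
    (hp : p.IsPath) (hv : v ∈ subLeaves (H ⊔ p.toSubgraph)) :
    v = s ∨ v = u ∨ v ∈ subLeaves H := by
  obtain ⟨hvV, hdeg⟩ := hv
  by_cases hvp : v ∈ p.support
  · by_contra! hne
    have hle : p.toSubgraph.neighborSet v ⊆ (H ⊔ p.toSubgraph).neighborSet v :=
      Subgraph.neighborSet_subset_of_subgraph le_sup_right v
    have := Set.ncard_le_ncard hle (Set.toFinite _)
    rw [hp.ncard_neighborSet_toSubgraph_eq_two hvp hne.1 hne.2.1] at this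
    omega
  · have hp_nbr : p.toSubgraph.neighborSet v = ∅ :=
      Set.eq_empty_of_forall_notMem fun w hw => hvp (Walk.mem_support_of_adj_toSubgraph hw)
    rw [Subgraph.neighborSet_sup, hp_nbr, Set.union_empty] at hdeg
    refine Or.inr (Or.inr ⟨?_, hdeg⟩)
    rcases hvV with hvH | hvp'
    · exact hvH
    · exact absurd (p.mem_verts_toSubgraph.mp hvp') hvp

theorem end_notMem_subLeaves_sup_toSubgraph {H : G.Subgraph} {s u w : V} {p : G.Walk s u}
    (hsu : s ≠ u) (hpH : ∀ v ∈ p.support, v ∈ H.verts → v = u) (huw : H.Adj u w) :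
    u ∉ subLeaves (H ⊔ p.toSubgraph) := by
  rintro ⟨-, hdeg⟩
  have hnil : ¬ p.Nil := Walk.not_nil_of_ne hsu
  have hpen_adj := p.toSubgraph_adj_penultimate hnil
  have hpen : p.penultimate ∉ H.verts := fun h =>
    hpen_adj.ne (hpH _ (Walk.mem_support_of_adj_toSubgraph hpen_adj) h)
  have htwo : 1 < ((H ⊔ p.toSubgraph).neighborSet u).ncard := by
    rw [Set.one_lt_ncard (Set.toFinite _)]
    exact ⟨w, Or.inl huw, p.penultimate, Or.inr hpen_adj.symm,
      fun h => hpen (h ▸ huw.snd_mem)⟩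
  omega

theorem ncard_subLeaves_sup_toSubgraph_le {H : G.Subgraph} (hH : H.coe.Preconnected)
    {s u : V} {p : G.Walk s u} (hp : p.IsPath) (hsu : s ≠ u) (hu : u ∈ H.verts)
    (hpH : ∀ v ∈ p.support, v ∈ H.verts → v = u) :
    (subLeaves (H ⊔ p.toSubgraph)).ncard ≤ max 2 ((subLeaves H).ncard + 1) := by
  by_cases hHu : H.verts ⊆ {u}
  · have hsub : subLeaves (H ⊔ p.toSubgraph) ⊆ {s, u} := by
      intro v hv
      rcases mem_subLeaves_sup_toSubgraph hp hv with rfl | rfl | hvH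
      exacts [Set.mem_insert _ _, Set.mem_insert_of_mem _ rfl,
        Set.mem_insert_of_mem _ (hHu hvH.1)]
    calc (subLeaves (H ⊔ p.toSubgraph)).ncard ≤ ({s, u} : Set V).ncard :=
          Set.ncard_le_ncard hsub (Set.toFinite _)
      _ ≤ 2 := (Set.ncard_insert_le s {u}).trans (by rw [Set.ncard_singleton])
      _ ≤ _ := le_max_left _ _
  · obtain ⟨w, hw, hwu⟩ := Set.not_subset.mp hHu
    obtain ⟨q⟩ := hH ⟨u, hu⟩ ⟨w, hw⟩
    have huw : H.Adj u q.snd :=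
      q.adj_snd (Walk.not_nil_of_ne fun h => hwu (congrArg Subtype.val h).symm)
    have hsub : subLeaves (H ⊔ p.toSubgraph) ⊆ insert s (subLeaves H) := by
      intro v hv
      rcases mem_subLeaves_sup_toSubgraph hp hv with rfl | rfl | hvH
      · exact Set.mem_insert _ _
      · exact absurd hv (end_notMem_subLeaves_sup_toSubgraph hsu hpH huw)
      · exact Set.mem_insert_of_mem _ hvH
    calc (subLeaves (H ⊔ p.toSubgraph)).ncard ≤ (insert s (subLeaves H)).ncard :=
          Set.ncard_le_ncard hsub (Set.toFinite _)
      _ ≤ (subLeaves H).ncard + 1 := Set.ncard_insert_le _ _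
      _ ≤ _ := le_max_right _ _

end SimpleGraph

section Independence

variable {G : SimpleGraph V} [Finite V] {S I : Set V}

theorem indepNumOn_bddAbove (G : SimpleGraph V) (S : Set V) :
    BddAbove {n | ∃ I : Set V, I ⊆ S ∧ I.Pairwise (fun a b => ¬ G.Adj a b) ∧ I.ncard = n} :=
  ⟨Nat.card V, by
    rintro n ⟨I, -, -, rfl⟩
    exact Set.ncard_le_card I⟩

theorem ncard_le_indepNumOn (hIS : I ⊆ S) (hI : I.Pairwise (fun a b => ¬ G.Adj a b)) :
    I.ncard ≤ indepNumOn G S :=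
  le_csSup (indepNumOn_bddAbove G S) ⟨I, hIS, hI, rfl⟩

theorem exists_maxIndepOn (G : SimpleGraph V) (S : Set V) : ∃ I, MaxIndepOn G S I :=
  show sSup {n | ∃ I : Set V, I ⊆ S ∧ I.Pairwise (fun a b => ¬ G.Adj a b) ∧ I.ncard = n} ∈ _ from
  Nat.sSup_mem ⟨0, ∅, Set.empty_subset _, Set.pairwise_empty _, Set.ncard_empty V⟩
    (indepNumOn_bddAbove G S)

theorem MaxIndepOn.exists_adj (hI : MaxIndepOn G S I) {v : V} (hvS : v ∈ S) (hvI : v ∉ I) :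
    ∃ w ∈ I, G.Adj v w := by
  by_contra! hnadj
  have hindep : (insert v I).Pairwise (fun a b => ¬ G.Adj a b) :=
    Set.pairwise_insert.mpr
      ⟨hI.2.1, fun w hw _ => ⟨hnadj w hw, fun h => hnadj w hw h.symm⟩⟩
  have := ncard_le_indepNumOn (Set.insert_subset hvS hI.1) hindep
  rw [Set.ncard_insert_of_notMem hvI I.toFinite, hI.2.2] at this
  omega

theorem indepNumOn_sdiff_add_one_le {Y : Set V}
    (hY : ∀ I, MaxIndepOn G S I → ∃ v ∈ I, v ∈ Y) :
    indepNumOn G (S \ Y) + 1 ≤ indepNumOn G S := by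
  obtain ⟨J, hJSY, hJ, hJcard⟩ := exists_maxIndepOn G (S \ Y)
  have hJS : J ⊆ S := hJSY.trans Set.sdiff_subset
  refine hJcard ▸ (ncard_le_indepNumOn hJS hJ).lt_of_ne fun heq => ?_
  obtain ⟨v, hvJ, hvY⟩ := hY J ⟨hJS, hJ, heq⟩
  exact (hJSY hvJ).2 hvY

end Independence

theorem exists_mem_support_of_maxIndepOn_of_longest [Finite V] {G : SimpleGraph V}
    {S X : Set V} {s₀ u₀ : V} {p : G.Walk s₀ u₀} (hp : p.IsPath) (hu₀ : u₀ ∈ X)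
    (hpX : ∀ v ∈ p.support, v ∈ X → v = u₀) (hs₀ : s₀ ∈ S \ X)
    (hmax : ∀ (s₁ u₁ : V) (q : G.Walk s₁ u₁), q.IsPath → u₁ ∈ X →
      (∀ v ∈ q.support, v ∈ X → v = u₁) →
      (∃ I : Set V, MaxIndepOn G (S \ X) I ∧ s₁ ∈ I) → q.length ≤ p.length)
    {I : Set V} (hI : MaxIndepOn G (S \ X) I) : ∃ v ∈ I, v ∈ p.support := by
  by_contra! hIp
  obtain ⟨s₁, hs₁I, hadj⟩ := hI.exists_adj hs₀ fun h => hIp s₀ h p.start_mem_support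
  have hqX : ∀ v ∈ (p.cons hadj.symm).support, v ∈ X → v = u₀ := by
    rintro v (_ | ⟨_, hv⟩) hvX
    exacts [absurd hvX (hI.1 hs₁I).2, hpX v hv hvX]
  have := hmax s₁ u₀ _ (hp.cons (hIp s₁ hs₁I)) hu₀ hqX ⟨I, hI, hs₁I⟩
  rw [Walk.length_cons] at this
  omega

theorem stmt_15_general [Fintype V] (G : SimpleGraph V)
    (T : G.Subgraph) (hT : T.coe.IsTree) (t : ℕ) (ht : 2 ≤ t)
    (hTl : (subLeaves T).ncard ≤ t)
    (S : Set V)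
    (s₀ u₀ : V) (p : G.Walk s₀ u₀) (hp : p.IsPath)
    (hu₀ : u₀ ∈ T.verts)
    (hint : ∀ v ∈ p.support, v ∈ T.verts → v = u₀)
    (hs₀ : ∃ I : Set V, MaxIndepOn G (S \ T.verts) I ∧ s₀ ∈ I)
    (hmax : ∀ (s₁ u₁ : V) (q : G.Walk s₁ u₁), q.IsPath → u₁ ∈ T.verts →
      (∀ v ∈ q.support, v ∈ T.verts → v = u₁) →
      (∃ I : Set V, MaxIndepOn G (S \ T.verts) I ∧ s₁ ∈ I) →
      q.length ≤ p.length) :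
    (∀ I : Set V, MaxIndepOn G (S \ T.verts) I → ∃ v ∈ I, v ∈ p.support) ∧
    indepNumOn G (S \ (T ⊔ p.toSubgraph).verts) + 1 ≤ indepNumOn G (S \ T.verts) ∧
    (T ⊔ p.toSubgraph).coe.IsTree ∧
    (subLeaves (T ⊔ p.toSubgraph)).ncard ≤ t + 1 := by
  obtain ⟨I₀, hI₀, hs₀I₀⟩ := hs₀
  have hs₀S : s₀ ∈ S \ T.verts := hI₀.1 hs₀I₀
  have hmeet : ∀ I, MaxIndepOn G (S \ T.verts) I → ∃ v ∈ I, v ∈ p.support :=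
    fun _ hI => exists_mem_support_of_maxIndepOn_of_longest hp hu₀ hint hs₀S hmax hI
  have hleaves := ncard_subLeaves_sup_toSubgraph_le hT.connected.preconnected hp
    (fun h => hs₀S.2 (h ▸ hu₀)) hu₀ hint
  refine ⟨hmeet, ?_, Subgraph.isTree_coe_sup_toSubgraph hT hp hu₀ hint, by omega⟩
  rw [Subgraph.verts_sup, Walk.verts_toSubgraph, ← Set.sdiff_sdiff]
  exact indepNumOn_sdiff_add_one_le hmeet

/-- The key induction step: a maximal path `P₀` from a vertex of a maximum independent
subset of `S - V(T)` to `T` meets every maximum independent subset of `S - V(T)`;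
hence `T' = T + P₀` is a tree with at most `t + 1` leaves and
`α_G(S - V(T')) ≤ α_G(S - V(T)) - 1`. -/
theorem stmt_15 [Fintype V] (G : SimpleGraph V) (hG : G.Connected)
    (T : G.Subgraph) (hT : T.coe.IsTree) (t : ℕ) (ht : 2 ≤ t)
    (hTl : (subLeaves T).ncard ≤ t)
    (S : Set V) (hST : (S \ T.verts).Nonempty)
    (s₀ u₀ : V) (p : G.Walk s₀ u₀) (hp : p.IsPath)
    (hu₀ : u₀ ∈ T.verts)
    (hint : ∀ v ∈ p.support, v ∈ T.verts → v = u₀)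
    (hs₀ : ∃ I : Set V, MaxIndepOn G (S \ T.verts) I ∧ s₀ ∈ I)
    (hmax : ∀ (s₁ u₁ : V) (q : G.Walk s₁ u₁), q.IsPath → u₁ ∈ T.verts →
      (∀ v ∈ q.support, v ∈ T.verts → v = u₁) →
      (∃ I : Set V, MaxIndepOn G (S \ T.verts) I ∧ s₁ ∈ I) →
      q.length ≤ p.length) :
    (∀ I : Set V, MaxIndepOn G (S \ T.verts) I → ∃ v ∈ I, v ∈ p.support) ∧
    indepNumOn G (S \ (T ⊔ p.toSubgraph).verts) + 1 ≤ indepNumOn G (S \ T.verts) ∧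
    (T ⊔ p.toSubgraph).coe.IsTree ∧
    (subLeaves (T ⊔ p.toSubgraph)).ncard ≤ t + 1 :=
  stmt_15_general G T hT t ht hTl S s₀ u₀ p hp hu₀ hint hs₀ hmax
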